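/- Let β ∈ (0,1) and let m_t^c := m_t - (β/(1-β)) r, where m_0 = m_0^f = 0, m_t^f = (1-β) g_t + β m_{t-1}^f, m_t = (1-β) g_t + β(m_{t-1} + r), and ‖r‖ ≤ C. Then ‖m_t^c - m_t^f‖ ≤ (C/(1-β)) β^{t+1}, and in particular m_t^c - m_t^f → 0 as t → ∞. -/

import Mathlib

/-!
The gap `d t = (m t - (β / (1 - β)) • r) - mf t` obeys `d (t + 1) = β • d t`: the residual `β • r`
fed into `m` at every step is exactly absorbed by the correction `β / (1 - β) • r`, its fixed
point. Hence `d t = β ^ t • d 0 = -(β ^ (t + 1) / (1 - β)) • r`, which decays geometrically.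
-/

open Filter

theorem eq_pow_smul_of_forall_succ_eq_smul {R M : Type*} [Monoid R] [MulAction R M]
    {c : R} {d : ℕ → M} (hd : ∀ t, d (t + 1) = c • d t) (t : ℕ) : d t = c ^ t • d 0 := by
  induction t with
  | zero => rw [pow_zero, one_smul]
  | succ t ih => rw [hd, ih, pow_succ', mul_smul]

section Momentum

variable {E : Type*} [AddCommGroup E] [Module ℝ E] {β : ℝ} {r : E} {m mf g : ℕ → E}

theorem corrected_momentum_gap_succ (hβ : β ≠ 1)
    (hmf : ∀ t ≥ 1, mf t = (1 - β) • g t + β • mf (t - 1))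
    (hm : ∀ t ≥ 1, m t = (1 - β) • g t + β • (m (t - 1) + r)) (t : ℕ) :
    (m (t + 1) - (β / (1 - β)) • r) - mf (t + 1) = β • ((m t - (β / (1 - β)) • r) - mf t) := by
  have h1β : 1 - β ≠ 0 := sub_ne_zero.mpr hβ.symm
  rw [hm (t + 1) t.succ_pos, hmf (t + 1) t.succ_pos, Nat.add_sub_cancel]
  match_scalars <;> field_simp <;> ring

theorem corrected_momentum_gap_eq (hβ : β ≠ 1) (hm0 : m 0 = 0) (hmf0 : mf 0 = 0)
    (hmf : ∀ t ≥ 1, mf t = (1 - β) • g t + β • mf (t - 1))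
    (hm : ∀ t ≥ 1, m t = (1 - β) • g t + β • (m (t - 1) + r)) (t : ℕ) :
    (m t - (β / (1 - β)) • r) - mf t = -(β ^ (t + 1) / (1 - β)) • r := by
  rw [eq_pow_smul_of_forall_succ_eq_smul (d := fun t => (m t - (β / (1 - β)) • r) - mf t)
    (corrected_momentum_gap_succ hβ hmf hm) t, hm0, hmf0,
    zero_sub, sub_zero, smul_neg, smul_smul, neg_smul, pow_succ, mul_div_assoc]

end Momentum

theorem norm_pow_div_smul_le {E : Type*} [SeminormedAddCommGroup E] [NormedSpace ℝ E]
    {β C : ℝ} {r : E} (hβ : β ∈ Set.Ioo (0 : ℝ) 1) (hr : ‖r‖ ≤ C) (n : ℕ) :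
    ‖(β ^ n / (1 - β)) • r‖ ≤ (C / (1 - β)) * β ^ n := by
  have hcoeff : 0 ≤ β ^ n / (1 - β) := div_nonneg (pow_nonneg hβ.1.le n) (sub_nonneg.mpr hβ.2.le)
  calc ‖(β ^ n / (1 - β)) • r‖ = β ^ n / (1 - β) * ‖r‖ := by
        rw [norm_smul, Real.norm_of_nonneg hcoeff]
    _ ≤ β ^ n / (1 - β) * C := mul_le_mul_of_nonneg_left hr hcoeff
    _ = (C / (1 - β)) * β ^ n := by ring

/-- The bias-corrected momentum `m_t^c = m_t - (β/(1-β)) r` approximates the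
full momentum with geometrically decaying error, hence the difference tends
to zero. -/
theorem corrected_momentum_debiased
    {E : Type*} [NormedAddCommGroup E] [NormedSpace ℝ E]
    (β : ℝ) (hβ : β ∈ Set.Ioo (0 : ℝ) 1)
    (C : ℝ) (r : E) (hr : ‖r‖ ≤ C)
    (m mf g : ℕ → E)
    (hm0 : m 0 = 0) (hmf0 : mf 0 = 0)
    (hmf : ∀ t ≥ 1, mf t = (1 - β) • g t + β • mf (t - 1))
    (hm : ∀ t ≥ 1, m t = (1 - β) • g t + β • (m (t - 1) + r)) :
    (∀ t, ‖(m t - (β / (1 - β)) • r) - mf t‖ ≤ (C / (1 - β)) * β ^ (t + 1)) ∧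
      Tendsto (fun t => (m t - (β / (1 - β)) • r) - mf t) atTop (nhds 0) := by
  have hgap := corrected_momentum_gap_eq hβ.2.ne hm0 hmf0 hmf hm
  refine ⟨fun t => ?_, ?_⟩
  · rw [hgap, neg_smul, norm_neg]
    exact norm_pow_div_smul_le hβ hr (t + 1)
  · have hpow : Tendsto (fun t : ℕ => β ^ (t + 1)) atTop (nhds 0) :=
      (tendsto_pow_atTop_nhds_zero_of_lt_one hβ.1.le hβ.2).comp (tendsto_add_atTop_nat 1)
    simpa only [hgap, zero_div, neg_zero, zero_smul] using
      ((hpow.div_const (1 - β)).neg).smul_const r
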